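/- Let α, α̃, c ∈ ℝ^g be vectors and β, β̃ ∈ ℝ be scalars, and set Δα = α − α̃ and Δβ = β − β̃. Then ‖[−(α + β·1_g − c)]_+‖₂ ≤ ‖[−(α̃ + β̃·1_g − c)]_+‖₂ + ‖[Δα]_−‖₂ + √g·|min(Δβ, 0)|. -/

import Mathlib

open scoped RealInnerProductSpace

/-- Componentwise positive part `[x]₊ i = max (x i) 0`. -/
noncomputable def posPart {g : ℕ} (x : EuclideanSpace ℝ (Fin g)) : EuclideanSpace ℝ (Fin g) :=
  WithLp.toLp 2 (fun i => max (x i) 0)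

/-- Componentwise negative part `[x]₋ i = min (x i) 0`. -/
noncomputable def negPart {g : ℕ} (x : EuclideanSpace ℝ (Fin g)) : EuclideanSpace ℝ (Fin g) :=
  WithLp.toLp 2 (fun i => min (x i) 0)

/-- The all-ones vector `1_g`. -/
noncomputable def ones (g : ℕ) : EuclideanSpace ℝ (Fin g) := WithLp.toLp 2 (fun _ => 1)

lemma norm_le_of_abs_le {g : ℕ} (x y : EuclideanSpace ℝ (Fin g))
    (h : ∀ i, |x i| ≤ |y i|) : ‖x‖ ≤ ‖y‖ := by
  rw [EuclideanSpace.norm_eq, EuclideanSpace.norm_eq]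
  apply Real.sqrt_le_sqrt
  apply Finset.sum_le_sum
  intro i _
  simp only [Real.norm_eq_abs]
  exact pow_le_pow_left₀ (abs_nonneg _) (h i) 2

lemma max_neg_eq_neg_min (a : ℝ) : max (-a) 0 = -(min a 0) := by
  rcases le_total a 0 with h | h
  · rw [min_eq_left h, max_eq_left (by linarith)]
  · rw [min_eq_right h, max_eq_right (by linarith), neg_zero]

/-- inequality (A.3):
`‖[−(α + β·1_g − c)]₊‖₂ ≤ ‖[−(α̃ + β̃·1_g − c)]₊‖₂ + ‖[Δα]₋‖₂ + √g·|min(Δβ, 0)|`. -/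
theorem neg_posPart_upper_bound (g : ℕ) (α αt c : EuclideanSpace ℝ (Fin g)) (β βt : ℝ) :
    ‖posPart (-(α + β • ones g - c))‖ ≤
      ‖posPart (-(αt + βt • ones g - c))‖ + ‖negPart (α - αt)‖ +
        Real.sqrt g * |min (β - βt) 0| := by
  set u : EuclideanSpace ℝ (Fin g) := _root_.posPart (-(αt + βt • ones g - c)) with hu
  set v : EuclideanSpace ℝ (Fin g) := WithLp.toLp 2 (fun i => max (-(α i - αt i)) 0) with hv
  set t : ℝ := max (-(β - βt)) 0 with ht
  set w : EuclideanSpace ℝ (Fin g) := WithLp.toLp 2 (fun _ => t) with hw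
  have hub : ∀ i, u i = max (-(αt i + βt - c i)) 0 := by
    intro i
    show max ((-(αt + βt • ones g - c)) i) 0 = _
    congr 1
    simp [ones]
  have key : ‖_root_.posPart (-(α + β • ones g - c))‖ ≤ ‖u + v + w‖ := by
    apply norm_le_of_abs_le
    intro i
    have h1 : _root_.posPart (-(α + β • ones g - c)) i = max (-(α i + β - c i)) 0 := by
      show max ((-(α + β • ones g - c)) i) 0 = _
      congr 1
      simp [ones]
    have h2 : (u + v + w) i = u i + v i + t := rfl
    have hnn1 : (0:ℝ) ≤ max (-(α i + β - c i)) 0 := le_max_right _ _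
    have hnn2 : (0:ℝ) ≤ u i + v i + t := by
      rw [hub i]
      exact add_nonneg (add_nonneg (le_max_right _ _) (le_max_right _ _)) (le_max_right _ _)
    rw [h1, h2, abs_of_nonneg hnn1, abs_of_nonneg hnn2, hub i]
    have hsum : -(α i + β - c i) = -(αt i + βt - c i) + (-(α i - αt i)) + (-(β - βt)) := by
      ring
    calc max (-(α i + β - c i)) 0
        = max (-(αt i + βt - c i) + (-(α i - αt i)) + (-(β - βt))) 0 := by rw [hsum]
      _ ≤ max (-(αt i + βt - c i)) 0 + max (-(α i - αt i)) 0 + max (-(β - βt)) 0 := by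
          rcases le_total (-(αt i + βt - c i) + (-(α i - αt i)) + (-(β - βt))) 0 with h | h
          · rw [max_eq_right h]
            exact add_nonneg (add_nonneg (le_max_right _ _) (le_max_right _ _))
              (le_max_right _ _)
          · rw [max_eq_left h]
            gcongr <;> [exact le_max_left _ _; exact le_max_left _ _; exact le_max_left _ _]
  have hvnorm : ‖v‖ = ‖_root_.negPart (α - αt)‖ := by
    have hveq : v = -(_root_.negPart (α - αt)) := by
      ext i
      show max (-(α i - αt i)) 0 = (-(_root_.negPart (α - αt))) i
      have : (-(_root_.negPart (α - αt))) i = -(min ((α - αt) i) 0) := rfl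
      rw [this]
      have : (α - αt) i = α i - αt i := rfl
      rw [this, max_neg_eq_neg_min]
    rw [hveq, norm_neg]
  have habs : |t| = |min (β - βt) 0| := by
    rw [ht, max_neg_eq_neg_min, abs_neg]
  have hwnorm : ‖w‖ = Real.sqrt g * |min (β - βt) 0| := by
    rw [EuclideanSpace.norm_eq]
    have hs : ∑ i : Fin g, ‖w i‖ ^ 2 = (g : ℝ) * t ^ 2 := by
      simp [hw, Real.norm_eq_abs, sq_abs, Finset.sum_const, mul_comm]
    rw [hs, Real.sqrt_mul (Nat.cast_nonneg g), Real.sqrt_sq_eq_abs, habs]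
  calc ‖_root_.posPart (-(α + β • ones g - c))‖ ≤ ‖u + v + w‖ := key
    _ ≤ ‖u‖ + ‖v‖ + ‖w‖ := norm_add₃_le
    _ = ‖u‖ + ‖_root_.negPart (α - αt)‖ + (Real.sqrt g * |min (β - βt) 0|) := by
        rw [hvnorm, hwnorm]
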